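/- Suppose ∫₀^∞ (1/a(x))·exp(−2B(x)) dx = ∞ and let Ω⁺(b,a) = sup_{x>0} ( ∫₀ˣ (1/a(y))·exp(−2B(y)) dy )·( ∫ₓ^∞ exp(2B(y)) dy ) ∈ [0,∞]. If λ > 1/(2·Ω⁺(b,a)) (with the convention 1/∞ = 0), then there is no finite measurable function f : (0,∞) → [0,∞) satisfying the integral equation f(x) = 1 + 2λ ∫₀ˣ (1/a(y))·exp(−2B(y)) ( ∫_y^∞ f(z)·exp(2B(z)) dz ) dy for all x > 0. -/

import Mathlib

/-!
Fix `x₀ > 0` at which `c = 2λ (∫₀^{x₀} e^{-2B}/a) (∫_{x₀}^∞ e^{2B})` exceeds `1`; it exists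
because `λ · 2Ω⁺ > 1`. Restricting the outer integral of the equation to `(0, x₀]` and the inner
one to `(x₀, ∞)` shows that every lower bound `t` of `f` on `(x₀, ∞)` improves to `c t`. Since
`f ≥ 1`, this gives `f ≥ cⁿ` on `(x₀, ∞)` for all `n`, so `f = ∞` there.
-/

open MeasureTheory Set Filter
open scoped ENNReal

/-- `B(x) = ∫₀ˣ (b/a)(y) dy`. -/
noncomputable def Bfun (a b : ℝ → ℝ) (x : ℝ) : ℝ := ∫ y in (0:ℝ)..x, b y / a y

/-- `Ω⁺(b,a) = sup_{x>0} (∫₀ˣ (1/a) e^{-2B}) (∫ₓ^∞ e^{2B}) ∈ [0,∞]`. -/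
noncomputable def OmegaPlus (a b : ℝ → ℝ) : ℝ≥0∞ :=
  ⨆ x ∈ Ioi (0:ℝ),
    ENNReal.ofReal (∫ y in (0:ℝ)..x, (a y)⁻¹ * Real.exp (-2 * Bfun a b y)) *
      ∫⁻ y in Ioi x, ENNReal.ofReal (Real.exp (2 * Bfun a b y))

theorem ENNReal.eq_top_of_mul_le_of_one_le {ι : Type*} {f : ι → ℝ≥0∞} {S : Set ι} {c : ℝ≥0∞}
    (hc : 1 < c) (hone : ∀ z ∈ S, 1 ≤ f z)
    (hstep : ∀ t, (∀ z ∈ S, t ≤ f z) → ∀ z ∈ S, c * t ≤ f z) :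
    ∀ z ∈ S, f z = ⊤ := by
  have hpow : ∀ n : ℕ, ∀ z ∈ S, c ^ n ≤ f z := by
    intro n
    induction n with
    | zero => simpa using hone
    | succ n ih => simpa [pow_succ'] using hstep _ ih
  intro z hz
  exact top_le_iff.mp <| le_of_tendsto' (ENNReal.tendsto_pow_atTop_nhds_top_iff.mpr hc)
    fun n => hpow n z hz

theorem ofReal_intervalIntegral_le_setLIntegral_Ioc {p : ℝ → ℝ} {a b : ℝ} (hab : a ≤ b)
    (hp : ∀ y ∈ Ioc a b, 0 ≤ p y) :
    ENNReal.ofReal (∫ y in a..b, p y) ≤ ∫⁻ y in Ioc a b, ENNReal.ofReal (p y) := by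
  rw [intervalIntegral.integral_of_le hab]
  calc ENNReal.ofReal (∫ y in Ioc a b, p y)
      ≤ ‖∫ y in Ioc a b, p y‖ₑ := by
        rw [Real.enorm_eq_ofReal_abs]; exact ENNReal.ofReal_le_ofReal (le_abs_self _)
    _ ≤ ∫⁻ y in Ioc a b, ‖p y‖ₑ := enorm_integral_le_lintegral_enorm _
    _ = ∫⁻ y in Ioc a b, ENNReal.ofReal (p y) :=
        setLIntegral_congr_fun measurableSet_Ioc fun y hy => Real.enorm_of_nonneg (hp y hy)

theorem mul_le_lintegral_Ioo_mul_lintegral_Ioi {p : ℝ → ℝ} {q f : ℝ → ℝ≥0∞} {x z : ℝ}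
    {t : ℝ≥0∞} (hx : 0 ≤ x) (hxz : x < z) (hp : ∀ y ∈ Ioc 0 x, 0 ≤ p y)
    (ht : ∀ w ∈ Ioi x, t ≤ f w) :
    ENNReal.ofReal (∫ y in (0:ℝ)..x, p y) * (∫⁻ w in Ioi x, q w) * t ≤
      ∫⁻ y in Ioo 0 z, ENNReal.ofReal (p y) * ∫⁻ w in Ioi y, f w * q w := by
  have htail : ∀ y ∈ Ioc 0 x, (∫⁻ w in Ioi x, q w) * t ≤ ∫⁻ w in Ioi y, f w * q w := by
    intro y hy
    calc (∫⁻ w in Ioi x, q w) * t ≤ ∫⁻ w in Ioi x, q w * t := lintegral_mul_const_le _ _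
      _ ≤ ∫⁻ w in Ioi x, f w * q w :=
          setLIntegral_mono_ae' measurableSet_Ioi <| ae_of_all _ fun w hw => by
            rw [mul_comm]; exact mul_le_mul_left (ht w hw) _
      _ ≤ ∫⁻ w in Ioi y, f w * q w := lintegral_mono_set (Ioi_subset_Ioi hy.2)
  rw [mul_assoc]
  calc ENNReal.ofReal (∫ y in (0:ℝ)..x, p y) * ((∫⁻ w in Ioi x, q w) * t)
      ≤ (∫⁻ y in Ioc 0 x, ENNReal.ofReal (p y)) * ((∫⁻ w in Ioi x, q w) * t) :=
        mul_le_mul_left (ofReal_intervalIntegral_le_setLIntegral_Ioc hx hp) _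
    _ ≤ ∫⁻ y in Ioc 0 x, ENNReal.ofReal (p y) * ((∫⁻ w in Ioi x, q w) * t) :=
        lintegral_mul_const_le _ _
    _ ≤ ∫⁻ y in Ioc 0 x, ENNReal.ofReal (p y) * ∫⁻ w in Ioi y, f w * q w :=
        setLIntegral_mono_ae' measurableSet_Ioc <| ae_of_all _ fun y hy =>
          mul_le_mul_right (htail y hy) _
    _ ≤ ∫⁻ y in Ioo 0 z, ENNReal.ofReal (p y) * ∫⁻ w in Ioi y, f w * q w :=
        lintegral_mono_set (Ioc_subset_Ioo_right hxz)

theorem exists_one_lt_mul_of_div_lt_omegaPlus {a b : ℝ → ℝ} {lam : ℝ}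
    (hlam : 1 / (2 * OmegaPlus a b) < ENNReal.ofReal lam) :
    ∃ x ∈ Ioi (0:ℝ), 1 < 2 * ENNReal.ofReal lam *
      (ENNReal.ofReal (∫ y in (0:ℝ)..x, (a y)⁻¹ * Real.exp (-2 * Bfun a b y)) *
        ∫⁻ y in Ioi x, ENNReal.ofReal (Real.exp (2 * Bfun a b y))) := by
  rw [ENNReal.div_lt_iff (Or.inr one_ne_zero) (Or.inr ENNReal.one_ne_top), mul_left_comm,
    ← mul_assoc, OmegaPlus, ENNReal.mul_iSup] at hlam
  simp_rw [ENNReal.mul_iSup] at hlam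
  exact lt_biSup_iff.mp hlam

theorem stmt19_general (a b : ℝ → ℝ)
    (hapos : ∀ x ∈ Ici (0:ℝ), 0 < a x)
    (lam : ℝ) (hlam : 1 / (2 * OmegaPlus a b) < ENNReal.ofReal lam) :
    ¬∃ f : ℝ → ℝ≥0∞, Measurable f ∧ (∀ x ∈ Ioi (0:ℝ), f x ≠ ⊤) ∧
      ∀ x ∈ Ioi (0:ℝ),
        f x = 1 + 2 * ENNReal.ofReal lam *
          ∫⁻ y in Ioo (0:ℝ) x,
            ENNReal.ofReal ((a y)⁻¹ * Real.exp (-2 * Bfun a b y)) *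
              ∫⁻ z in Ioi y, f z * ENNReal.ofReal (Real.exp (2 * Bfun a b z)) := by
  rintro ⟨f, -, hfin, hf⟩
  obtain ⟨x₀, hx₀ : 0 < x₀, hc⟩ := exists_one_lt_mul_of_div_lt_omegaPlus hlam
  have hpos : ∀ z ∈ Ioi x₀, 0 < z := fun z hz => hx₀.trans hz
  have hweight : ∀ y ∈ Ioc 0 x₀, 0 ≤ (a y)⁻¹ * Real.exp (-2 * Bfun a b y) := fun y hy =>
    mul_nonneg (inv_nonneg.mpr (hapos y (mem_Ici.mpr hy.1.le)).le) (Real.exp_pos _).le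
  have hone : ∀ z ∈ Ioi x₀, 1 ≤ f z := fun z hz => (hf z (hpos z hz)).symm ▸ le_self_add
  have htop := ENNReal.eq_top_of_mul_le_of_one_le hc hone fun t ht z hz => by
    rw [hf z (hpos z hz), mul_assoc]
    exact le_add_left <| mul_le_mul_right
      (mul_le_lintegral_Ioo_mul_lintegral_Ioi hx₀.le hz hweight ht) _
  exact hfin (x₀ + 1) (hpos _ (lt_add_one x₀)) (htop _ (lt_add_one x₀))

theorem stmt19 (a b : ℝ → ℝ)
    (ha : ContDiffOn ℝ 1 a (Ici 0)) (hapos : ∀ x ∈ Ici (0:ℝ), 0 < a x)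
    (hb : ContinuousOn b (Ici 0))
    (hinf : ∫⁻ x in Ioi (0:ℝ),
        ENNReal.ofReal ((a x)⁻¹ * Real.exp (-2 * Bfun a b x)) = ⊤)
    (lam : ℝ) (hlam : 1 / (2 * OmegaPlus a b) < ENNReal.ofReal lam) :
    ¬∃ f : ℝ → ℝ≥0∞, Measurable f ∧ (∀ x ∈ Ioi (0:ℝ), f x ≠ ⊤) ∧
      ∀ x ∈ Ioi (0:ℝ),
        f x = 1 + 2 * ENNReal.ofReal lam *
          ∫⁻ y in Ioo (0:ℝ) x,
            ENNReal.ofReal ((a y)⁻¹ * Real.exp (-2 * Bfun a b y)) *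
              ∫⁻ z in Ioi y, f z * ENNReal.ofReal (Real.exp (2 * Bfun a b z)) :=
  stmt19_general a b hapos lam hlam
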